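/- arXiv:math/0103104 — 2 statements merged into one kernel-verified Lean document; each statement's English description precedes it below -/
import Mathlib

section
/- Two point processes on ℝ^d with the same avoidance functions are equal in distribution; that is, a simple point process is completely determined by the probabilities P(N(K) = 0) over compact sets K. -/
/-!
The avoidance events `{μ | μ K = 0}`, `K` compact, form a π-system, so two laws with the same
avoidance function agree on the σ-algebra `𝒜` these events generate. On simple counting measures
`𝒜` already sees every `μ ↦ μ B`. For compact `K`, `μ K` is the eventual number of dyadic cells of
side `2⁻ⁿ` that meet the finite set `K ∩ supp μ`, because these cells eventually separate its
points; and "`μ` misses `K ∩ cell`" is an avoidance event since `K ∩ cell` is σ-compact. From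
compact sets one passes to all Borel sets by a π-λ argument on the restrictions of `μ` to compact
sets. So on the simple counting measures every Borel event coincides with an event of `𝒜`.
-/

open MeasureTheory ProbabilityTheory Real
open scoped ENNReal

/-- `μ` is a simple, locally finite counting measure: it is finite on compact sets
and is the counting measure of some set of points. -/
def IsSimpleCountingMeasure {E : Type*} [MeasurableSpace E] [TopologicalSpace E]
    (μ : Measure E) : Prop :=
  (∀ K : Set E, IsCompact K → μ K < ⊤) ∧ ∃ s : Set E, μ = Measure.count.restrict s

open Filter Set Topology

theorem IsCompact.isSigmaCompact_inter_of_isOpen {X : Type*} [PseudoEMetricSpace X]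
    {K U : Set X} (hK : IsCompact K) (hU : IsOpen U) : IsSigmaCompact (K ∩ U) := by
  obtain ⟨F, hF, -, rfl, -⟩ := hU.exists_iUnion_isClosed
  rw [inter_iUnion]
  exact isSigmaCompact_iUnion_of_isCompact _ fun n => hK.inter_right (hF n)

theorem IsSigmaCompact.measurableSet {X : Type*} [TopologicalSpace X] [MeasurableSpace X]
    [T2Space X] [OpensMeasurableSpace X] {s : Set X} (hs : IsSigmaCompact s) :
    MeasurableSet s := by
  obtain ⟨K, hK, rfl⟩ := hs
  exact .iUnion fun n => (hK n).measurableSet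

theorem measure_preimage_eq_of_isPiSystem {Ω α : Type*} [MeasurableSpace Ω] {μ : Measure Ω}
    [IsFiniteMeasure μ] {C : Set (Set α)} (hC : IsPiSystem C) {f g : Ω → α}
    (hf : Measurable[_, .generateFrom C] f) (hg : Measurable[_, .generateFrom C] g)
    (h : ∀ s ∈ C, μ (f ⁻¹' s) = μ (g ⁻¹' s)) {s : Set α}
    (hs : MeasurableSet[.generateFrom C] s) : μ (f ⁻¹' s) = μ (g ⁻¹' s) := by
  let _ := MeasurableSpace.generateFrom C
  have hmap : μ.map f = μ.map g :=
    ext_of_generate_finite C rfl hC (fun t ht => by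
        rw [Measure.map_apply hf (.basic t ht), Measure.map_apply hg (.basic t ht), h t ht])
      (by rw [Measure.map_apply hf .univ, Measure.map_apply hg .univ]; rfl)
  rw [← Measure.map_apply hf hs, ← Measure.map_apply hg hs, hmap]

theorem measurable_measure_of_measurable_apply_isCompact {α E : Type*} [MeasurableSpace α]
    [TopologicalSpace E] [MeasurableSpace E] [BorelSpace E] [SigmaCompactSpace E]
    {μ : α → Measure E} [∀ a, IsFiniteMeasureOnCompacts (μ a)]
    (h : ∀ K, IsCompact K → Measurable fun a => μ a K) : Measurable μ := by
  have hrestrict : ∀ n, Measurable fun a => (μ a).restrict (compactCovering E n) := by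
    intro n
    have (a : α) : IsFiniteMeasure ((μ a).restrict (compactCovering E n)) :=
      isFiniteMeasure_restrict.2 (isCompact_compactCovering E n).measure_ne_top
    refine .measure_of_isPiSystem (BorelSpace.measurable_eq.trans borel_eq_generateFrom_isClosed)
      (fun s hs t ht _ => hs.inter ht) (fun F hF => ?_) ?_
    · simp_rw [Measure.restrict_apply hF.measurableSet]
      exact h _ ((isCompact_compactCovering E n).inter_left hF)
    · simp_rw [Measure.restrict_apply_univ]
      exact h _ (isCompact_compactCovering E n)
  refine Measure.measurable_of_measurable_coe _ fun B hB => ?_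
  have hsup (a : α) : μ a B = ⨆ n, (μ a).restrict (compactCovering E n) B := by
    rw [← Measure.restrict_iUnion_apply_eq_iSup
        (Monotone.directed_le (compactCovering_subset E)) hB,
      iUnion_compactCovering, Measure.restrict_univ]
  simp_rw [hsup]
  exact .iSup fun n => (Measure.measurable_coe hB).comp (hrestrict n)

namespace MeasureTheory.Measure

variable (E : Type*) [TopologicalSpace E] [MeasurableSpace E]

def avoidanceSets : Set (Set (Measure E)) :=
  {A | ∃ K : Set E, IsCompact K ∧ A = {μ | μ K = 0}}

abbrev avoidanceMeasurableSpace : MeasurableSpace (Measure E) :=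
  .generateFrom (avoidanceSets E)

theorem isPiSystem_avoidanceSets : IsPiSystem (avoidanceSets E) := by
  rintro _ ⟨K, hK, rfl⟩ _ ⟨L, hL, rfl⟩ -
  exact ⟨K ∪ L, hK.union hL, by ext μ; simp [measure_union_null_iff]⟩

theorem avoidanceMeasurableSpace_le [T2Space E] [OpensMeasurableSpace E] :
    avoidanceMeasurableSpace E ≤ Measure.instMeasurableSpace := by
  refine MeasurableSpace.generateFrom_le ?_
  rintro _ ⟨K, hK, rfl⟩
  exact measurable_coe hK.measurableSet (measurableSet_singleton 0)

variable {E}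

theorem measurableSet_avoidance_of_isSigmaCompact {B : Set E} (hB : IsSigmaCompact B) :
    MeasurableSet[avoidanceMeasurableSpace E] {μ : Measure E | μ B = 0} := by
  obtain ⟨K, hK, rfl⟩ := hB
  simp only [measure_iUnion_null_iff, ofPred_forall]
  exact .iInter fun n => .basic _ ⟨K n, hK n, rfl⟩

end MeasureTheory.Measure

open Measure

theorem IsSimpleCountingMeasure.isFiniteMeasureOnCompacts {E : Type*} [MeasurableSpace E]
    [TopologicalSpace E] {μ : Measure E} (hμ : IsSimpleCountingMeasure μ) :
    IsFiniteMeasureOnCompacts μ :=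
  ⟨hμ.1⟩

section Dyadic

variable {ι : Type*} [Fintype ι]

noncomputable def dyadicIndex (n : ℕ) (x : EuclideanSpace ℝ ι) : ι → ℤ :=
  fun i => ⌊(2 : ℝ) ^ n * x i⌋

theorem eventually_floor_two_pow_mul_ne {a b : ℝ} (hab : a ≠ b) :
    ∀ᶠ n : ℕ in atTop, ⌊(2 : ℝ) ^ n * a⌋ ≠ ⌊(2 : ℝ) ^ n * b⌋ := by
  have hlarge : Tendsto (fun n : ℕ => (2 : ℝ) ^ n * |a - b|) atTop atTop :=
    (tendsto_pow_atTop_atTop_of_one_lt one_lt_two).atTop_mul_const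
      (abs_pos.2 (sub_ne_zero.2 hab))
  filter_upwards [hlarge.eventually_ge_atTop 1] with n hn heq
  have := Int.abs_sub_lt_one_of_floor_eq_floor heq
  rw [← mul_sub, abs_mul, abs_of_pos (by positivity : (0 : ℝ) < 2 ^ n)] at this
  linarith

theorem eventually_dyadicIndex_ne {x y : EuclideanSpace ℝ ι} (hxy : x ≠ y) :
    ∀ᶠ n in atTop, dyadicIndex n x ≠ dyadicIndex n y := by
  obtain ⟨i, hi⟩ : ∃ i, x i ≠ y i := by
    by_contra! h
    exact hxy (PiLp.ext h)
  exact (eventually_floor_two_pow_mul_ne hi).mono fun n hn heq => hn (congrFun heq i)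

theorem Set.Finite.eventually_injOn_dyadicIndex {F : Set (EuclideanSpace ℝ ι)} (hF : F.Finite) :
    ∀ᶠ n in atTop, F.InjOn (dyadicIndex n) := by
  have hsep : ∀ᶠ n in atTop, ∀ p ∈ F ×ˢ F, dyadicIndex n p.1 = dyadicIndex n p.2 → p.1 = p.2 :=
    (hF.prod hF).eventually_all.2 fun p _ => by
      by_cases h : p.1 = p.2
      · exact .of_forall fun _ _ => h
      · exact (eventually_dyadicIndex_ne h).mono fun _ hn heq => absurd heq hn
  exact hsep.mono fun n hn x hx y hy => hn (x, y) ⟨hx, hy⟩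

theorem IsCompact.isSigmaCompact_inter_dyadicIndex_preimage {K : Set (EuclideanSpace ℝ ι)}
    (hK : IsCompact K) (n : ℕ) (z : ι → ℤ) :
    IsSigmaCompact (K ∩ dyadicIndex n ⁻¹' {z}) := by
  have hcell : dyadicIndex n ⁻¹' {z} =
      (⋂ i, {x : EuclideanSpace ℝ ι | (z i : ℝ) ≤ 2 ^ n * x i}) ∩
        ⋂ i, {x : EuclideanSpace ℝ ι | 2 ^ n * x i < z i + 1} := by
    ext x
    simp [dyadicIndex, funext_iff, Int.floor_eq_iff, forall_and]
  have hcont (i : ι) : Continuous fun x : EuclideanSpace ℝ ι => (2 : ℝ) ^ n * x i := by fun_prop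
  rw [hcell, ← inter_assoc]
  refine (hK.inter_right ?_).isSigmaCompact_inter_of_isOpen ?_
  · exact isClosed_iInter fun i => isClosed_le continuous_const (hcont i)
  · exact isOpen_iInter_of_finite fun i => isOpen_lt (hcont i) continuous_const

noncomputable def dyadicCount (K : Set (EuclideanSpace ℝ ι)) (n : ℕ)
    (μ : Measure (EuclideanSpace ℝ ι)) : ℝ≥0∞ :=
  ∑' z : ι → ℤ, if μ (K ∩ dyadicIndex n ⁻¹' {z}) = 0 then 0 else 1

theorem measurable_dyadicCount {K : Set (EuclideanSpace ℝ ι)} (hK : IsCompact K) (n : ℕ) :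
    Measurable[avoidanceMeasurableSpace _] (dyadicCount K n) :=
  let _ := avoidanceMeasurableSpace (EuclideanSpace ℝ ι)
  .tsum fun z => .ite
    (measurableSet_avoidance_of_isSigmaCompact (hK.isSigmaCompact_inter_dyadicIndex_preimage n z))
    measurable_const measurable_const

theorem dyadicCount_count_restrict {K : Set (EuclideanSpace ℝ ι)} (hK : IsCompact K) (n : ℕ)
    (s : Set (EuclideanSpace ℝ ι)) :
    dyadicCount K n (count.restrict s) = (dyadicIndex n '' (K ∩ s)).encard := by
  have hzero (z : ι → ℤ) : count.restrict s (K ∩ dyadicIndex n ⁻¹' {z}) = 0 ↔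
      z ∉ dyadicIndex n '' (K ∩ s) := by
    rw [restrict_apply_eq_zero (hK.isSigmaCompact_inter_dyadicIndex_preimage n z).measurableSet,
      count_eq_zero_iff, eq_empty_iff_forall_notMem]
    simp only [mem_inter_iff, mem_preimage, mem_singleton_iff, mem_image, not_exists, not_and]
    grind
  rw [dyadicCount, ← ENNReal.tsum_set_one, tsum_subtype _ fun _ => (1 : ℝ≥0∞)]
  refine tsum_congr fun z => ?_
  by_cases hz : z ∈ dyadicIndex n '' (K ∩ s) <;> simp [hz, hzero]

theorem IsSimpleCountingMeasure.eventually_dyadicCount_eq {μ : Measure (EuclideanSpace ℝ ι)}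
    (hμ : IsSimpleCountingMeasure μ) {K : Set (EuclideanSpace ℝ ι)} (hK : IsCompact K) :
    ∀ᶠ n in atTop, dyadicCount K n μ = μ K := by
  obtain ⟨hfin, s, rfl⟩ := hμ
  have hKs : (K ∩ s).Finite := by
    rw [← count_apply_lt_top, ← restrict_apply hK.measurableSet]
    exact hfin K hK
  filter_upwards [hKs.eventually_injOn_dyadicIndex] with n hinj
  rw [dyadicCount_count_restrict hK, hinj.encard_image, restrict_apply hK.measurableSet,
    count_apply hKs.measurableSet]

theorem measurable_subtype_val_comap_avoidance :
    Measurable[(avoidanceMeasurableSpace (EuclideanSpace ℝ ι)).comap Subtype.val]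
      (Subtype.val : {μ : Measure (EuclideanSpace ℝ ι) // IsSimpleCountingMeasure μ} → _) := by
  let _ := (avoidanceMeasurableSpace (EuclideanSpace ℝ ι)).comap
    (Subtype.val : {μ : Measure (EuclideanSpace ℝ ι) // IsSimpleCountingMeasure μ} → _)
  have (μ : {μ : Measure (EuclideanSpace ℝ ι) // IsSimpleCountingMeasure μ}) :
      IsFiniteMeasureOnCompacts μ.1 := μ.2.isFiniteMeasureOnCompacts
  refine measurable_measure_of_measurable_apply_isCompact fun K hK => ?_
  have hlimsup :
      (fun μ : {μ : Measure (EuclideanSpace ℝ ι) // IsSimpleCountingMeasure μ} => μ.1 K) =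
        fun μ => limsup (fun n => dyadicCount K n μ.1) atTop :=
    funext fun μ =>
      ((limsup_congr (μ.2.eventually_dyadicCount_eq hK)).trans (limsup_const _)).symm
  rw [hlimsup]
  exact .limsup fun n => (measurable_dyadicCount hK n).comp (comap_measurable _)

end Dyadic

/-- A simple point process on `ℝ^d` is determined by its avoidance function: if two
simple point processes satisfy `P(N(K) = 0) = P(N'(K) = 0)` for every compact `K`,
then they have the same distribution. -/
theorem simplePP_determined_by_avoidance
    {Ω : Type*} [MeasureSpace Ω] [IsProbabilityMeasure (ℙ : Measure Ω)] {d : ℕ}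
    (N N' : Ω → Measure (EuclideanSpace ℝ (Fin d)))
    (hNmeas : Measurable N) (hN'meas : Measurable N')
    (hNsimple : ∀ ω, IsSimpleCountingMeasure (N ω))
    (hN'simple : ∀ ω, IsSimpleCountingMeasure (N' ω))
    (havoid : ∀ K : Set (EuclideanSpace ℝ (Fin d)), IsCompact K →
      ℙ {ω | N ω K = 0} = ℙ {ω | N' ω K = 0}) :
    Measure.map N ℙ = Measure.map N' ℙ := by
  have hle := avoidanceMeasurableSpace_le (EuclideanSpace ℝ (Fin d))
  have hagree {A} (hA : MeasurableSet[avoidanceMeasurableSpace _] A) :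
      ℙ (N ⁻¹' A) = ℙ (N' ⁻¹' A) :=
    measure_preimage_eq_of_isPiSystem (isPiSystem_avoidanceSets _) (hNmeas.mono le_rfl hle)
      (hN'meas.mono le_rfl hle) (by rintro _ ⟨K, hK, rfl⟩; exact havoid K hK) hA
  ext A hA
  obtain ⟨A', hA', hAA'⟩ := measurable_subtype_val_comap_avoidance hA
  have hpre {M : Ω → Measure (EuclideanSpace ℝ (Fin d))}
      (hM : ∀ ω, IsSimpleCountingMeasure (M ω)) : M ⁻¹' A = M ⁻¹' A' :=
    -- `M` factors through the subtype of simple counting measures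
    congrArg (preimage (codRestrict M _ hM)) hAA'.symm
  rw [map_apply hNmeas hA, map_apply hN'meas hA, hpre hNsimple, hpre hN'simple]
  exact hagree hA'
end

section
/- Let Z be a ℕ-valued random variable with P(Z = n) > 0 for all n, and suppose P(Z = i+j) C(i+j,i) p^i (1−p)^j = p_i q_j for all i, j ≥ 0, where (p_i) and (q_j) are probability distributions on ℕ and 0 < p < 1. Then there exists μ > 0 such that P(Z = n) = e^{−μ} μⁿ/n! for all n. -/
open Real

/-- Combinatorial core of the characterization: if probability mass functions
`(r_n)`, `(p_i)`, `(q_j)` on ℕ with `r_n > 0` satisfy the factorization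
`r_{i+j} C(i+j,i) pⁱ(1-p)ʲ = p_i q_j` for all `i, j`, then `r` is a Poisson pmf. -/
theorem poisson_of_factorization (p : ℝ) (hp : 0 < p) (hp1 : p < 1)
    (r pd qd : ℕ → ℝ)
    (hrpos : ∀ n, 0 < r n)
    (hpd : ∀ i, 0 ≤ pd i) (hqd : ∀ j, 0 ≤ qd j)
    (hrsum : ∑' n : ℕ, r n = 1)
    (hpsum : ∑' i : ℕ, pd i = 1) (hqsum : ∑' j : ℕ, qd j = 1)
    (hfact : ∀ i j : ℕ,
      r (i + j) * ((i + j).choose i : ℝ) * p ^ i * (1 - p) ^ j = pd i * qd j) :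
    ∃ μ : ℝ, 0 < μ ∧ ∀ n : ℕ, r n = Real.exp (-μ) * μ ^ n / n.factorial := by
  set μ : ℝ := r 1 / r 0 with hμ
  have hr0 := hrpos 0
  have hμpos : 0 < μ := div_pos (hrpos 1) hr0
  -- key recursion: r (n+1) = r n * μ / (n+1)
  have h00 := hfact 0 0
  simp at h00
  have hrec : ∀ n : ℕ, r n = r 0 * μ ^ n / n.factorial := by
    intro n
    induction n with
    | zero => simp
    | succ n ih =>
      have h1 := hfact n 1
      have h2 := hfact n 0
      have h3 := hfact 0 1
      simp [Nat.choose_succ_self_right] at h1 h2 h3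
      -- h1 : r (n+1) * (n+1) * p^n * (1-p) = pd n * qd 1
      have hq : (0 : ℝ) < 1 - p := by linarith
      have hpn : (0:ℝ) < p ^ n := pow_pos hp n
      have hμr : r 1 = μ * r 0 := by rw [hμ]; field_simp
      have hm : (r n * p ^ n) * (r 1 * (1 - p)) = (pd n * qd 1) * (pd 0 * qd 0) := by
        rw [h2, h3]; ring
      rw [← h1, ← h00] at hm
      have e : (r n * r 1) * (p ^ n * (1 - p))
          = (r (n + 1) * (↑n + 1) * r 0) * (p ^ n * (1 - p)) := by
        linear_combination hm
      have e2 := mul_right_cancel₀ (by positivity : p ^ n * (1 - p) ≠ 0) e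
      have key2 : r (n + 1) * (↑n + 1) = r n * μ := by
        refine mul_right_cancel₀ (ne_of_gt hr0) ?_
        rw [hμr] at e2
        linear_combination - e2
      have hfacn : (0:ℝ) < (n.factorial : ℝ) := by positivity
      have ih' : r n * n.factorial = r 0 * μ ^ n := by
        rw [ih]; field_simp
      rw [Nat.factorial_succ]
      push_cast
      rw [eq_div_iff (by positivity)]
      calc r (n+1) * ((↑n+1) * ↑n.factorial) = (r (n+1) * (↑n+1)) * ↑n.factorial := by ring
        _ = r n * μ * ↑n.factorial := by rw [key2]
        _ = (r n * ↑n.factorial) * μ := by ring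
        _ = r 0 * μ ^ (n+1) := by rw [ih']; ring
  refine ⟨μ, hμpos, fun n => ?_⟩
  -- compute r 0 from the sum
  have hsum : ∑' n : ℕ, r n = r 0 * Real.exp μ := by
    rw [Real.exp_eq_exp_ℝ, NormedSpace.exp_eq_tsum_div, ← tsum_mul_left]
    exact tsum_congr fun n => by rw [hrec n]; ring
  rw [hsum] at hrsum
  have hr0eq : r 0 = Real.exp (-μ) := by
    rw [Real.exp_neg]
    field_simp
    linarith [hrsum]
  rw [hrec n, hr0eq]
end
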